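/- Let V₁, V₂, V₃ be quadratic homogeneous vector fields on ℝ³ such that dim span{V₁(x), V₂(x), V₃(x)} ≤ 1 for every x ∈ ℝ³. Then at least one of the following holds: (1) there exist a quadratic homogeneous vector field Q on ℝ³ and constants C₁, C₂, C₃ ∈ ℝ such that V_i = C_i·Q for i = 1,2,3; (2) there exist a linear vector field L on ℝ³ and linear functionals ℓ₁, ℓ₂, ℓ₃ ∈ (ℝ³)* such that V_i(x) = ℓ_i(x)·L(x) for all x and i = 1,2,3; (3) there exist a vector v ∈ ℝ³ and quadratic forms Q₁, Q₂, Q₃ : ℝ³ → ℝ such that V_i(x) = Q_i(x)·v for all x and i = 1,2,3. -/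

import Mathlib

/-!
Evaluating the hypothesis at every point makes all `2 × 2` minors of the matrix of component
polynomials `(P i j)` vanish identically. Over the factorial ring `ℝ[x₁, x₂, x₃]` such a matrix is
an outer product `P i j = t i * g j`: dividing a nonzero row by its gcd gives a coprime `g`, and
coprimality makes each `P i j₀` divisible by `g j₀`. Since `p ↦ p(s • X)` sends homogeneous polynomials to
monomials in `s`, and factors of a monomial over a domain are monomials, the `t i` are homogeneous
of a common degree `a` and the `g j` of degree `2 - a`. The cases `a = 0, 1, 2` are the three
alternatives.
-/

namespace Polynomial

theorem eq_monomial_of_mul_eq_monomial {A : Type*} [Semiring A] [NoZeroDivisors A]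
    {f g : A[X]} {n : ℕ} {c : A} (hc : c ≠ 0) (h : f * g = monomial n c) :
    f = monomial f.natDegree f.leadingCoeff := by
  classical
  have hfg : f * g ≠ 0 := by rwa [h, Ne, monomial_eq_zero_iff]
  have hf : f ≠ 0 := left_ne_zero_of_mul hfg
  have hg : g ≠ 0 := right_ne_zero_of_mul hfg
  have hdeg := natDegree_mul hf hg
  have htrail := natTrailingDegree_mul hf hg
  rw [h, natDegree_monomial, if_neg hc] at hdeg
  rw [h, natTrailingDegree_monomial hc] at htrail
  have := f.natTrailingDegree_le_natDegree
  have := g.natTrailingDegree_le_natDegree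
  ext k
  rw [coeff_monomial]
  split_ifs with hk
  · rw [← hk]; rfl
  · rcases lt_or_gt_of_ne hk with hk | hk
    · exact coeff_eq_zero_of_natDegree_lt hk
    · exact coeff_eq_zero_of_lt_natTrailingDegree (by omega)

end Polynomial

theorem exists_eq_mul_of_forall_mul_eq_mul {R ι κ : Type*} [CommMonoidWithZero R]
    [NormalizedGCDMonoid R] [Fintype κ] {M : ι → κ → R}
    (hM : ∀ i k j l, M i j * M k l = M i l * M k j) :
    ∃ (t : ι → R) (g : κ → R), ∀ i j, M i j = t i * g j := by
  by_cases! h : ∀ i j, M i j = 0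
  · exact ⟨0, 0, fun i j => by simp [h]⟩
  obtain ⟨i₀, j₀, hM₀⟩ := h
  obtain ⟨g, hg, hg_gcd⟩ := Finset.univ.extract_gcd (M i₀) ⟨j₀, Finset.mem_univ _⟩
  set d := Finset.univ.gcd (M i₀)
  replace hg : ∀ j, M i₀ j = d * g j := fun j => hg j (Finset.mem_univ _)
  have hd : d ≠ 0 := left_ne_zero_of_mul (hg j₀ ▸ hM₀)
  have hg₀ : g j₀ ≠ 0 := right_ne_zero_of_mul (hg j₀ ▸ hM₀)
  have hrow : ∀ i j, M i j * g j₀ = M i j₀ * g j := fun i j => mul_left_cancel₀ hd <| by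
    rw [mul_left_comm, ← hg, hM, hg, mul_left_comm]
  -- `g j₀` divides each `M i j₀ * g j`, hence their gcd `M i j₀ * gcd g = M i j₀`.
  have hdvd : ∀ i, g j₀ ∣ M i j₀ := fun i => by
    have := (Finset.dvd_gcd fun j _ => Dvd.intro_left _ (hrow i j)).trans
      (Finset.gcd_mul_left' Finset.univ g (M i j₀)).dvd
    rwa [hg_gcd, mul_one] at this
  choose t ht using hdvd
  refine ⟨t, g, fun i j => mul_right_cancel₀ hg₀ ?_⟩
  rw [hrow, ht]
  ac_rfl

theorem mul_eq_mul_of_finrank_span_le_one {K ι κ : Type*} [Field K] [Finite ι] {v : ι → κ → K}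
    (h : Module.finrank K (Submodule.span K (Set.range v)) ≤ 1) (i k : ι) (j l : κ) :
    v i j * v k l = v i l * v k j := by
  have := FiniteDimensional.span_of_finite K (Set.finite_range v)
  obtain ⟨w, hw⟩ := ((Submodule.span K (Set.range v)).finrank_le_one_iff_isPrincipal.mp h).principal
  have hv : ∀ i, ∃ a : K, a • w = v i := fun i =>
    Submodule.mem_span_singleton.mp (hw ▸ Submodule.subset_span (Set.mem_range_self i))
  obtain ⟨a, ha⟩ := hv i
  obtain ⟨b, hb⟩ := hv k
  simp only [← ha, ← hb, Pi.smul_apply, smul_eq_mul]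
  ring

namespace MvPolynomial

variable {σ R : Type*} [CommSemiring R]

/-- `p ↦ p(s • X)`, a polynomial in `s` whose coefficients are the homogeneous components
of `p`. -/
noncomputable def scaleVars : MvPolynomial σ R →+* Polynomial (MvPolynomial σ R) :=
  eval₂Hom (Polynomial.C.comp C) fun i => Polynomial.C (X i) * Polynomial.X

theorem scaleVars_monomial (d : σ →₀ ℕ) (c : R) :
    scaleVars (monomial d c) = Polynomial.monomial d.degree (monomial d c) := by
  classical
  rw [scaleVars, eval₂Hom_monomial, Finsupp.prod]
  simp only [mul_pow, Finset.prod_mul_distrib, Finset.prod_pow_eq_pow_sum, ← map_pow, ← map_prod,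
    RingHom.comp_apply]
  rw [← mul_assoc, ← map_mul, Polynomial.C_mul_X_pow_eq_monomial, Finsupp.degree, monomial_eq,
    Finsupp.prod]
  rfl

theorem coeff_scaleVars (p : MvPolynomial σ R) (k : ℕ) :
    (scaleVars p).coeff k = homogeneousComponent k p := by
  induction p using MvPolynomial.induction_on' with
  | monomial d c =>
    rw [scaleVars_monomial, Polynomial.coeff_monomial, homogeneousComponent_of_mem
      ((mem_homogeneousSubmodule _ _).mpr (isHomogeneous_monomial c rfl))]
    simp only [eq_comm]
  | add p q hp hq => rw [map_add, Polynomial.coeff_add, hp, hq, map_add]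

theorem eval_one_scaleVars (p : MvPolynomial σ R) : (scaleVars p).eval 1 = p := by
  suffices (Polynomial.evalRingHom 1).comp scaleVars = RingHom.id (MvPolynomial σ R) from
    RingHom.congr_fun this p
  apply ringHom_ext <;> simp [scaleVars]

theorem IsHomogeneous.scaleVars_eq {p : MvPolynomial σ R} {n : ℕ} (h : p.IsHomogeneous n) :
    scaleVars p = Polynomial.monomial n p := by
  refine Polynomial.ext fun k => ?_
  rw [coeff_scaleVars, Polynomial.coeff_monomial,
    homogeneousComponent_of_mem ((mem_homogeneousSubmodule _ _).mpr h)]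
  simp only [eq_comm]

theorem isHomogeneous_of_scaleVars_eq_monomial {p c : MvPolynomial σ R} {n : ℕ}
    (h : scaleVars p = Polynomial.monomial n c) : p.IsHomogeneous n := by
  have hc : c = p := by
    rw [← eval_one_scaleVars p, h, Polynomial.eval_monomial, one_pow, mul_one]
  have hp : homogeneousComponent n p = p := by
    rw [← coeff_scaleVars, h, Polynomial.coeff_monomial_same, hc]
  exact hp ▸ homogeneousComponent_isHomogeneous n p

theorem IsHomogeneous.exists_isHomogeneous_of_mul [NoZeroDivisors R] {p q : MvPolynomial σ R}
    {n : ℕ} (h : (p * q).IsHomogeneous n) (hpq : p * q ≠ 0) :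
    ∃ a b, a + b = n ∧ p.IsHomogeneous a ∧ q.IsHomogeneous b := by
  have key : scaleVars p * scaleVars q = Polynomial.monomial n (p * q) := by
    rw [← map_mul, h.scaleVars_eq]
  have hp := isHomogeneous_of_scaleVars_eq_monomial
    (Polynomial.eq_monomial_of_mul_eq_monomial hpq key)
  have hq := isHomogeneous_of_scaleVars_eq_monomial
    (Polynomial.eq_monomial_of_mul_eq_monomial hpq ((mul_comm _ _).trans key))
  exact ⟨_, _, (hp.mul hq).inj_right h hpq, hp, hq⟩

theorem exists_isHomogeneous_of_forall_isHomogeneous_mul [NoZeroDivisors R] {ι κ : Type*}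
    {t : ι → MvPolynomial σ R} {g : κ → MvPolynomial σ R} {n : ℕ}
    (h : ∀ i j, (t i * g j).IsHomogeneous n) {i₀ : ι} {j₀ : κ} (h₀ : t i₀ * g j₀ ≠ 0) :
    ∃ a b, a + b = n ∧ (∀ i, (t i).IsHomogeneous a) ∧ ∀ j, (g j).IsHomogeneous b := by
  obtain ⟨a, b, hab, ha, hb⟩ := (h i₀ j₀).exists_isHomogeneous_of_mul h₀
  refine ⟨a, b, hab, fun i => ?_, fun j => ?_⟩
  · by_cases hi : t i = 0
    · exact hi ▸ isHomogeneous_zero _ _ _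
    obtain ⟨a', b', hab', ha', hb'⟩ :=
      (h i j₀).exists_isHomogeneous_of_mul (mul_ne_zero hi (right_ne_zero_of_mul h₀))
    obtain rfl : b' = b := hb'.inj_right hb (right_ne_zero_of_mul h₀)
    obtain rfl : a' = a := by omega
    exact ha'
  · by_cases hj : g j = 0
    · exact hj ▸ isHomogeneous_zero _ _ _
    obtain ⟨a', b', hab', ha', hb'⟩ :=
      (h i₀ j).exists_isHomogeneous_of_mul (mul_ne_zero (left_ne_zero_of_mul h₀) hj)
    obtain rfl : a' = a := ha'.inj_right ha (left_ne_zero_of_mul h₀)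
    obtain rfl : b' = b := by omega
    exact hb'

theorem IsHomogeneous.exists_linearMap_eval_eq {p : MvPolynomial σ R}
    (h : p.IsHomogeneous 1) : ∃ ℓ : (σ → R) →ₗ[R] R, ∀ x, eval x p = ℓ x := by
  have hp : p ∈ Submodule.span R (Set.range X) := by
    rw [← homogeneousSubmodule_one_eq_span_X]; exact h
  clear h
  induction hp using Submodule.span_induction with
  | mem q hq =>
    obtain ⟨i, rfl⟩ := hq
    exact ⟨LinearMap.proj i, fun x => eval_X (f := x) i⟩
  | zero => exact ⟨0, fun x => by simp⟩
  | add q r _ _ hq hr =>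
    obtain ⟨ℓ, hℓ⟩ := hq
    obtain ⟨ℓ', hℓ'⟩ := hr
    exact ⟨ℓ + ℓ', fun x => by simp [hℓ, hℓ']⟩
  | smul c q _ hq =>
    obtain ⟨ℓ, hℓ⟩ := hq
    exact ⟨c • ℓ, fun x => by simp [hℓ]⟩

theorem IsHomogeneous.eval_eq_coeff_zero {p : MvPolynomial σ R} (h : p.IsHomogeneous 0)
    (x : σ → R) : eval x p = coeff 0 p := by
  conv_lhs => rw [totalDegree_eq_zero_iff_eq_C.mp ((totalDegree_zero_iff_isHomogeneous _).mpr h)]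
  exact eval_C _

end MvPolynomial

open MvPolynomial

theorem three_collinear_quadratic_fields
    (V : Fin 3 → (Fin 3 → ℝ) → (Fin 3 → ℝ))
    (P : Fin 3 → Fin 3 → MvPolynomial (Fin 3) ℝ)
    (hP : ∀ i j, (P i j).IsHomogeneous 2)
    (hVP : ∀ (i : Fin 3) (x : Fin 3 → ℝ) (j : Fin 3),
      V i x j = MvPolynomial.eval x (P i j))
    (hcol : ∀ x : Fin 3 → ℝ,
      Module.finrank ℝ (Submodule.span ℝ (Set.range fun i => V i x)) ≤ 1) :
    (∃ (Q : (Fin 3 → ℝ) → (Fin 3 → ℝ)) (PQ : Fin 3 → MvPolynomial (Fin 3) ℝ),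
      (∀ j, (PQ j).IsHomogeneous 2) ∧
      (∀ (x : Fin 3 → ℝ) (j : Fin 3), Q x j = MvPolynomial.eval x (PQ j)) ∧
      ∃ C : Fin 3 → ℝ, ∀ (i : Fin 3) (x : Fin 3 → ℝ), V i x = C i • Q x) ∨
    (∃ (L : (Fin 3 → ℝ) →ₗ[ℝ] (Fin 3 → ℝ)) (ℓ : Fin 3 → ((Fin 3 → ℝ) →ₗ[ℝ] ℝ)),
      ∀ (i : Fin 3) (x : Fin 3 → ℝ), V i x = ℓ i x • L x) ∨
    (∃ (v : Fin 3 → ℝ) (Q : Fin 3 → MvPolynomial (Fin 3) ℝ),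
      (∀ i, (Q i).IsHomogeneous 2) ∧
      ∀ (i : Fin 3) (x : Fin 3 → ℝ), V i x = MvPolynomial.eval x (Q i) • v) := by
  have hminor : ∀ i k j l, P i j * P k l = P i l * P k j := fun i k j l =>
    MvPolynomial.funext fun x => by
      simpa only [map_mul, ← hVP] using mul_eq_mul_of_finrank_span_le_one (hcol x) i k j l
  let := UniqueFactorizationMonoid.strongNormalizationMonoid (α := MvPolynomial (Fin 3) ℝ)
  let := UniqueFactorizationMonoid.toNormalizedGCDMonoid (MvPolynomial (Fin 3) ℝ)
  obtain ⟨t, g, hfac⟩ := exists_eq_mul_of_forall_mul_eq_mul hminor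
  have hV : ∀ i x, V i x = fun j => eval x (t i) * eval x (g j) := fun i x =>
    funext fun j => by rw [hVP, hfac, map_mul]
  by_cases! hzero : ∀ i j, t i * g j = 0
  · refine Or.inr (Or.inr ⟨0, 0, fun _ => isHomogeneous_zero _ _ _, fun i x => funext fun j => ?_⟩)
    simp [hVP, hfac, hzero]
  obtain ⟨i₀, j₀, h₀⟩ := hzero
  obtain ⟨a, b, hab, ht, hg⟩ :=
    exists_isHomogeneous_of_forall_isHomogeneous_mul (fun i j => hfac i j ▸ hP i j) h₀
  obtain rfl | rfl | rfl : a = 0 ∨ a = 1 ∨ a = 2 := by omega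
  · obtain rfl : b = 2 := by omega
    refine Or.inl ⟨fun x j => eval x (g j), g, hg, fun _ _ => rfl, fun i => coeff 0 (t i),
      fun i x => funext fun j => ?_⟩
    simp [hV, (ht i).eval_eq_coeff_zero]
  · obtain rfl : b = 1 := by omega
    choose ℓ hℓ using fun i => (ht i).exists_linearMap_eval_eq
    choose L hL using fun j => (hg j).exists_linearMap_eval_eq
    refine Or.inr (Or.inl ⟨LinearMap.pi L, ℓ, fun i x => funext fun j => ?_⟩)
    simp [hV, hℓ, hL]
  · obtain rfl : b = 0 := by omega
    refine Or.inr (Or.inr ⟨fun j => coeff 0 (g j), t, ht, fun i x => funext fun j => ?_⟩)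
    simp [hV, (hg j).eval_eq_coeff_zero]
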